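/- arXiv:1203.2346 — 2 statements merged into one kernel-verified Lean document; each statement's English description precedes it below -/
import Mathlib

section
/- For every r ∈ ℕ and every birooted r-ball α⃗, the function f_A : Gr → ℕ given by f_A[G,o] = |{x ∈ N_G(o) : [G,o,x] ∈ A}|, where A = T_r(Gr⃗, α⃗), is Lipschitz with constant Δ·2^r on the ultrametric space (Gr, ρ); in particular it is continuous. -/
open MeasureTheory Filter Topology SimpleGraph ENNReal

/-- A rooted graph: a graph together with a distinguished root vertex. -/
structure RGraph : Type 1 where
  V : Type
  G : SimpleGraph V
  root : V

/-- Rooted graph isomorphism (equality of isomorphism classes). -/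
def RGraph.Equiv (X Y : RGraph) : Prop :=
  ∃ e : X.G ≃g Y.G, e X.root = Y.root

/-- The rooted ball of radius `r` around the root. -/
def RGraph.ball (X : RGraph) (r : ℕ) : RGraph where
  V := ↥{v : X.V | X.G.dist X.root v ≤ r}
  G := X.G.induce {v : X.V | X.G.dist X.root v ≤ r}
  root := ⟨X.root, by simp [SimpleGraph.dist_self]⟩

/-- `α` is a rooted `r`-ball: every vertex is within distance `r` of the root. -/
def RGraph.IsBall (α : RGraph) (r : ℕ) : Prop :=
  ∀ v : α.V, α.G.dist α.root v ≤ r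

/-- A rooted graph which is countable, connected and has all degrees `≤ Δ`. -/
structure PRGraph (Δ : ℕ) extends RGraph where
  countable : Countable V
  connected : G.Connected
  degbd : ∀ v : V, (G.neighborSet v).Finite ∧ (G.neighborSet v).ncard ≤ Δ

def rsetoid (Δ : ℕ) : Setoid (PRGraph Δ) where
  r X Y := X.toRGraph.Equiv Y.toRGraph
  iseqv := by
    constructor
    · intro X
      exact ⟨SimpleGraph.Iso.refl, rfl⟩
    · rintro X Y ⟨e, h⟩
      exact ⟨e.symm, by rw [← h]; exact e.symm_apply_apply _⟩
    · rintro X Y Z ⟨e, he⟩ ⟨f, hf⟩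
      exact ⟨e.trans f, by show f (e _) = _; rw [he, hf]⟩

/-- The space of isomorphism classes of countable connected rooted graphs with
degree bound `Δ`. -/
def Gr (Δ : ℕ) := Quotient (rsetoid Δ)

def mkG {Δ : ℕ} (X : PRGraph Δ) : Gr Δ := Quotient.mk (rsetoid Δ) X

open Classical in
/-- The ultrametric `ρ` on `Gr Δ`. -/
noncomputable def rdist {Δ : ℕ} (q₁ q₂ : Gr Δ) : ℝ :=
  if q₁ = q₂ then 0
  else (2 : ℝ) ^ (-((sSup {t : ℕ | ∃ X Y : PRGraph Δ, q₁ = mkG X ∧ q₂ = mkG Y ∧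
    (X.toRGraph.ball t).Equiv (Y.toRGraph.ball t)} : ℕ) : ℤ))

/-- The basic clopen set `T_r(Gr, α)` of classes whose `r`-ball is `α`. -/
def Tset (Δ r : ℕ) (α : RGraph) : Set (Gr Δ) :=
  {q | ∃ X : PRGraph Δ, q = mkG X ∧ (X.toRGraph.ball r).Equiv α}
/-- A birooted graph: a graph with an ordered pair of distinguished vertices. -/
structure BRGraph : Type 1 where
  V : Type
  G : SimpleGraph V
  root₁ : V
  root₂ : V

/-- Birooted graph isomorphism. -/
def BRGraph.Equiv (X Y : BRGraph) : Prop :=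
  ∃ e : X.G ≃g Y.G, e X.root₁ = Y.root₁ ∧ e X.root₂ = Y.root₂

/-- The birooted ball of radius `r` around the first root (always containing the
second root). -/
def BRGraph.ball (X : BRGraph) (r : ℕ) : BRGraph where
  V := ↥{v : X.V | X.G.dist X.root₁ v ≤ r ∨ v = X.root₂}
  G := X.G.induce {v : X.V | X.G.dist X.root₁ v ≤ r ∨ v = X.root₂}
  root₁ := ⟨X.root₁, Or.inl (by simp [SimpleGraph.dist_self])⟩
  root₂ := ⟨X.root₂, Or.inr rfl⟩

/-- `α` is a birooted `r`-ball: every vertex is within distance `r` of the first root. -/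
def BRGraph.IsBall (α : BRGraph) (r : ℕ) : Prop :=
  ∀ v : α.V, α.G.dist α.root₁ v ≤ r

/-- Swapping the two roots of a birooted graph. -/
def BRGraph.swap (X : BRGraph) : BRGraph := ⟨X.V, X.G, X.root₂, X.root₁⟩

/-- A birooted graph with adjacent roots which is countable, connected and has all
degrees `≤ Δ`. -/
structure BPRGraph (Δ : ℕ) where
  V : Type
  G : SimpleGraph V
  root₁ : V
  root₂ : V
  adj : G.Adj root₁ root₂
  countable : Countable V
  connected : G.Connected
  degbd : ∀ v : V, (G.neighborSet v).Finite ∧ (G.neighborSet v).ncard ≤ Δ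

def BPRGraph.toBR {Δ : ℕ} (X : BPRGraph Δ) : BRGraph := ⟨X.V, X.G, X.root₁, X.root₂⟩

def BPRGraph.swap {Δ : ℕ} (X : BPRGraph Δ) : BPRGraph Δ :=
  ⟨X.V, X.G, X.root₂, X.root₁, X.adj.symm, X.countable, X.connected, X.degbd⟩

def bsetoid (Δ : ℕ) : Setoid (BPRGraph Δ) where
  r X Y := X.toBR.Equiv Y.toBR
  iseqv := by
    constructor
    · intro X
      exact ⟨SimpleGraph.Iso.refl, rfl, rfl⟩
    · rintro X Y ⟨e, h₁, h₂⟩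
      exact ⟨e.symm, by rw [← h₁]; exact e.symm_apply_apply _,
        by rw [← h₂]; exact e.symm_apply_apply _⟩
    · rintro X Y Z ⟨e, he₁, he₂⟩ ⟨f, hf₁, hf₂⟩
      exact ⟨e.trans f, by show f (e _) = _; rw [he₁, hf₁],
        by show f (e _) = _; rw [he₂, hf₂]⟩

/-- The space of isomorphism classes of countable connected birooted graphs with
degree bound `Δ`. -/
def BGr (Δ : ℕ) := Quotient (bsetoid Δ)

def mkB {Δ : ℕ} (X : BPRGraph Δ) : BGr Δ := Quotient.mk (bsetoid Δ) X

open Classical in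
/-- The ultrametric `ρ⃗` on `BGr Δ`. -/
noncomputable def brdist {Δ : ℕ} (q₁ q₂ : BGr Δ) : ℝ :=
  if q₁ = q₂ then 0
  else (2 : ℝ) ^ (-((sSup {t : ℕ | ∃ X Y : BPRGraph Δ, q₁ = mkB X ∧ q₂ = mkB Y ∧
    (X.toBR.ball t).Equiv (Y.toBR.ball t)} : ℕ) : ℤ))

/-- The basic clopen set `T_r(Gr⃗, α⃗)` of birooted classes whose `r`-ball is `α⃗`. -/
def TsetB (Δ r : ℕ) (α : BRGraph) : Set (BGr Δ) :=
  {q | ∃ X : BPRGraph Δ, q = mkB X ∧ (X.toBR.ball r).Equiv α}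

/-- The root-swapping involution `ι` on `BGr Δ`. -/
def iota {Δ : ℕ} : BGr Δ → BGr Δ :=
  Quotient.map BPRGraph.swap (by
    rintro X Y ⟨e, h₁, h₂⟩
    exact ⟨e, h₂, h₁⟩)

/-- The birooted graph obtained from a rooted graph and a neighbour of the root. -/
def PRGraph.bi {Δ : ℕ} (X : PRGraph Δ) (x : X.V) (h : X.G.Adj X.root x) : BPRGraph Δ :=
  ⟨X.V, X.G, X.root, x, h, X.countable, X.connected, X.degbd⟩

/-- `f_A [G,o] = |{x ∈ N_G(o) : [G,o,x] ∈ A}|`, computed on the canonical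
representative of the class. -/
noncomputable def fA {Δ : ℕ} (A : Set (BGr Δ)) (q : Gr Δ) : ℕ :=
  Set.ncard {p : (Quotient.out q).G.neighborSet (Quotient.out q).root |
    mkB ((Quotient.out q).bi p.1 p.2) ∈ A}

/-- `[G,o] ↦ Σ_{x ∈ N_G(o)} F [G,o,x]`. -/
noncomputable def outSum {Δ : ℕ} (F : BGr Δ → ℝ≥0∞) (q : Gr Δ) : ℝ≥0∞ :=
  ∑' p : (Quotient.out q).G.neighborSet (Quotient.out q).root,
    F (mkB ((Quotient.out q).bi p.1 p.2))

/-- `[G,o] ↦ Σ_{x ∈ N_G(o)} F [G,x,o]`. -/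
noncomputable def inSum {Δ : ℕ} (F : BGr Δ → ℝ≥0∞) (q : Gr Δ) : ℝ≥0∞ :=
  ∑' p : (Quotient.out q).G.neighborSet (Quotient.out q).root,
    F (mkB (((Quotient.out q).bi p.1 p.2).swap))

/-- Unimodularity of a measure on `Gr Δ`. -/
def Unimodular {Δ : ℕ} [MeasurableSpace (Gr Δ)] [MeasurableSpace (BGr Δ)]
    (μ : Measure (Gr Δ)) : Prop :=
  ∀ F : BGr Δ → ℝ≥0∞, Measurable F →
    ∫⁻ q, inSum F q ∂μ = ∫⁻ q, outSum F q ∂μ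

/-- The kernel sending `[G,o]` to `Σ_{x ∈ N_G(o)} δ_{[G,o,x]}`. -/
noncomputable def edgeKer {Δ : ℕ} [MeasurableSpace (BGr Δ)] (q : Gr Δ) :
    Measure (BGr Δ) :=
  haveI : Countable (Quotient.out q).V := (Quotient.out q).countable
  Measure.sum (fun p : (Quotient.out q).G.neighborSet (Quotient.out q).root =>
    Measure.dirac (mkB ((Quotient.out q).bi p.1 p.2)))

/-- The edge measure `ν⃗` on `BGr Δ` associated to a measure `ν` on `Gr Δ`:
`ν⃗(A) = ∫ |{x ∈ N_G(o) : [G,o,x] ∈ A}| dν[G,o]`. -/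
noncomputable def vecM {Δ : ℕ} [MeasurableSpace (Gr Δ)] [MeasurableSpace (BGr Δ)]
    (ν : Measure (Gr Δ)) : Measure (BGr Δ) :=
  ν.bind edgeKer

/-- Weak convergence of a sequence of Borel measures. -/
def WeakConv {α : Type*} [TopologicalSpace α] [MeasurableSpace α]
    (μn : ℕ → Measure α) (μ : Measure α) : Prop :=
  ∀ f : α → ℝ, Continuous f →
    Tendsto (fun n => ∫ x, f x ∂(μn n)) atTop (𝓝 (∫ x, f x ∂μ))
/-- The connected component of `x` in a finite graph `G` with degree bound `Δ`,
viewed as a rooted graph with root `x`. -/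
noncomputable def compPR {V : Type} [Fintype V] (G : SimpleGraph V) {Δ : ℕ}
    (hdeg : ∀ v : V, (G.neighborSet v).ncard ≤ Δ) (x : V) : PRGraph Δ where
  V := ↥{y : V | G.Reachable x y}
  G := G.induce {y : V | G.Reachable x y}
  root := ⟨x, ⟨Walk.nil⟩⟩
  countable := by infer_instance
  connected := by
    classical
    apply SimpleGraph.induce_connected_of_patches x (by exact ⟨Walk.nil⟩)
    intro v hv
    obtain ⟨p⟩ := hv
    refine ⟨{w | w ∈ p.support}, ?_, p.start_mem_support, p.end_mem_support, ?_⟩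
    · intro w hw
      exact ⟨(p.takeUntil w hw)⟩
    · exact (p.connected_induce_support _ _)
  degbd := by
    intro v
    constructor
    · exact Set.toFinite _
    · have himg : Subtype.val '' ((G.induce {y : V | G.Reachable x y}).neighborSet v)
          ⊆ G.neighborSet v.1 := by
        rintro _ ⟨w, hw, rfl⟩
        exact hw
      calc ((G.induce {y : V | G.Reachable x y}).neighborSet v).ncard
          = (Subtype.val '' ((G.induce {y : V | G.Reachable x y}).neighborSet v)).ncard :=
            (Set.ncard_image_of_injective _ Subtype.val_injective).symm
        _ ≤ (G.neighborSet v.1).ncard := Set.ncard_le_ncard himg (Set.toFinite _)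
        _ ≤ Δ := hdeg v.1

/-- The law `Ψ(G)` of a finite graph `G`: the distribution of the rooted connected
component `[G_o, o]` of a uniformly random vertex `o`. -/
noncomputable def law {V : Type} [Fintype V] (G : SimpleGraph V) {Δ : ℕ}
    (hdeg : ∀ v : V, (G.neighborSet v).ncard ≤ Δ) [MeasurableSpace (Gr Δ)] :
    Measure (Gr Δ) :=
  (Fintype.card V : ℝ≥0∞)⁻¹ • ∑ x : V, Measure.dirac (mkG (compPR G hdeg x))

/-! If two rooted graphs have isomorphic `s`-balls with `r < s`, the isomorphism matches the
neighbours of the two roots and carries the birooted `r`-ball at each neighbour `x` onto the one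
at the image of `x`: all of these lie inside the `s`-ball, where distances from the root are the
same as in the whole graph. So `f_A` takes the same value at both graphs, and `f_A q₁ ≠ f_A q₂`
forces `ρ(q₁, q₂) ≥ 2^{-r}`, while `|f_A q₁ - f_A q₂| ≤ Δ` always. -/

namespace SimpleGraph

variable {V W : Type*} {G : SimpleGraph V} {H : SimpleGraph W}

theorem Iso.dist_le (e : G ≃g H) (u v : V) : H.dist (e u) (e v) ≤ G.dist u v := by
  by_cases hr : G.Reachable u v
  · obtain ⟨p, hp⟩ := hr.exists_walk_length_eq_dist
    calc H.dist (e u) (e v) ≤ (p.map e.toHom).length := SimpleGraph.dist_le _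
      _ = G.dist u v := by rw [Walk.length_map, hp]
  · rw [dist_eq_zero_of_not_reachable (mt Iso.reachable_iff.mp hr)]
    exact Nat.zero_le _

theorem Iso.dist_eq (e : G ≃g H) (u v : V) : H.dist (e u) (e v) = G.dist u v :=
  (e.dist_le u v).antisymm <| by simpa using e.symm.dist_le (e u) (e v)

def Iso.induceOfMemIff (e : G ≃g H) {s : Set V} {t : Set W} (h : ∀ v, v ∈ s ↔ e v ∈ t) :
    G.induce s ≃g H.induce t :=
  ⟨e.toEquiv.subtypeEquiv h, e.map_adj_iff⟩

def induceInduceIso (G : SimpleGraph V) {s t : Set V} (u : Set s) (hts : t ⊆ s)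
    (h : ∀ x : s, x ∈ u ↔ x.1 ∈ t) : (G.induce s).induce u ≃g G.induce t where
  toFun x := ⟨x.1.1, (h x.1).1 x.2⟩
  invFun y := ⟨⟨y.1, hts y.2⟩, (h _).2 y.2⟩
  left_inv _ := rfl
  right_inv _ := rfl
  map_rel_iff' := Iff.rfl

def neighborSetInduceEquiv {s : Set V} (v : s) (h : G.neighborSet v ⊆ s) :
    (G.induce s).neighborSet v ≃ G.neighborSet v where
  toFun w := ⟨w.1.1, w.2⟩
  invFun w := ⟨⟨w.1, h w.2⟩, w.2⟩
  left_inv _ := rfl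
  right_inv _ := rfl

theorem dist_induce_setOf_dist_le {o v : V} {s : ℕ} (ho : G.dist o o ≤ s)
    (hv : G.dist o v ≤ s) :
    (G.induce {x | G.dist o x ≤ s}).dist ⟨o, ho⟩ ⟨v, hv⟩ = G.dist o v := by
  classical
  set B := {x | G.dist o x ≤ s}
  by_cases hr : G.Reachable o v
  · obtain ⟨p, hp⟩ := hr.exists_walk_length_eq_dist
    have hpB : ∀ x ∈ p.support, x ∈ B := fun x hx =>
      ((dist_le (p.takeUntil x hx)).trans ((p.length_takeUntil_le_length hx).trans hp.le)).trans hv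
    have hlen : (p.induce B hpB).length = p.length :=
      (Walk.length_map _ _).symm.trans (congrArg Walk.length (p.map_induce hpB))
    obtain ⟨q, hq⟩ := Reachable.exists_walk_length_eq_dist ⟨p.induce B hpB⟩
    refine le_antisymm ((dist_le _).trans (hlen.trans hp).le) ?_
    calc G.dist o v ≤ (q.map (Embedding.induce B).toHom).length := dist_le _
      _ = _ := by rw [Walk.length_map, hq]
  · have hrB : ¬ (G.induce B).Reachable ⟨o, ho⟩ ⟨v, hv⟩ := fun ⟨q⟩ =>
      hr ⟨q.map (Embedding.induce B).toHom⟩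
    rw [dist_eq_zero_of_not_reachable hr, dist_eq_zero_of_not_reachable hrB]

end SimpleGraph

def RGraph.toBR (X : RGraph) (v : X.V) : BRGraph := ⟨X.V, X.G, X.root, v⟩

theorem RGraph.Equiv.ball {X Y : RGraph} (h : X.Equiv Y) (t : ℕ) :
    (X.ball t).Equiv (Y.ball t) := by
  obtain ⟨e, he⟩ := h
  refine ⟨e.induceOfMemIff fun v => ?_, Subtype.ext he⟩
  change _ ≤ t ↔ _ ≤ t
  rw [← he, e.dist_eq]

namespace BRGraph

theorem Equiv.symm {X Y : BRGraph} (h : X.Equiv Y) : Y.Equiv X := by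
  obtain ⟨e, h₁, h₂⟩ := h
  exact ⟨e.symm, by rw [← h₁, e.symm_apply_apply], by rw [← h₂, e.symm_apply_apply]⟩

theorem Equiv.trans {X Y Z : BRGraph} (h : X.Equiv Y) (h' : Y.Equiv Z) : X.Equiv Z := by
  obtain ⟨e, he₁, he₂⟩ := h
  obtain ⟨f, hf₁, hf₂⟩ := h'
  exact ⟨e.trans f, by simp [he₁, hf₁], by simp [he₂, hf₂]⟩

theorem Equiv.ball {X Y : BRGraph} (h : X.Equiv Y) (t : ℕ) :
    (X.ball t).Equiv (Y.ball t) := by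
  obtain ⟨e, he₁, he₂⟩ := h
  refine ⟨e.induceOfMemIff fun v => ?_, Subtype.ext he₁, Subtype.ext he₂⟩
  change _ ∨ _ ↔ _ ∨ _
  rw [← he₁, ← he₂, e.dist_eq, e.injective.eq_iff]

end BRGraph

namespace RGraph

theorem toBR_ball_ball_equiv (X : RGraph) {r s : ℕ} (hrs : r ≤ s) {v : X.V}
    (hv : X.G.dist X.root v ≤ s) :
    (((X.ball s).toBR ⟨v, hv⟩).ball r).Equiv ((X.toBR v).ball r) := by
  refine ⟨SimpleGraph.induceInduceIso _ _ (fun w hw => hw.elim (·.trans hrs) (· ▸ hv))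
    fun ⟨w, hw⟩ => ?_, rfl, rfl⟩
  simp only [RGraph.toBR, RGraph.ball, Subtype.ext_iff]
  change _ ∨ _ ↔ _ ∨ _
  rw [SimpleGraph.dist_induce_setOf_dist_le _ hw]

theorem Equiv.exists_neighborSet_equiv {X Y : RGraph} {r s : ℕ} (hrs : r < s)
    (h : (X.ball s).Equiv (Y.ball s)) :
    ∃ φ : X.G.neighborSet X.root ≃ Y.G.neighborSet Y.root,
      ∀ x, ((X.toBR x.1).ball r).Equiv ((Y.toBR (φ x).1).ball r) := by
  obtain ⟨e, he⟩ := h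
  have hball {Z : RGraph} : Z.G.neighborSet Z.root ⊆ {v | Z.G.dist Z.root v ≤ s} :=
    fun v hv => (SimpleGraph.dist_eq_one_iff_adj.mpr hv).le.trans (by omega)
  let eN : (X.ball s).G.neighborSet (X.ball s).root ≃ (Y.ball s).G.neighborSet (Y.ball s).root :=
    e.toEquiv.subtypeEquiv fun w => by rw [← he]; exact e.map_adj_iff.symm
  refine ⟨(SimpleGraph.neighborSetInduceEquiv _ hball).symm.trans
    (eN.trans (SimpleGraph.neighborSetInduceEquiv _ hball)), fun x => ?_⟩
  let x' : (X.ball s).V := ⟨x.1, hball x.2⟩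
  have hXY : (((X.ball s).toBR x').ball r).Equiv (((Y.ball s).toBR (e x')).ball r) :=
    BRGraph.Equiv.ball ⟨e, he, rfl⟩ r
  exact ((X.toBR_ball_ball_equiv hrs.le x'.2).symm.trans hXY).trans
    (Y.toBR_ball_ball_equiv hrs.le (e x').2)

end RGraph

theorem mkB_mem_TsetB_iff {Δ r : ℕ} {α : BRGraph} {Z : BPRGraph Δ} :
    mkB Z ∈ TsetB Δ r α ↔ (Z.toBR.ball r).Equiv α := by
  refine ⟨fun ⟨W, hZW, hW⟩ => ?_, fun h => ⟨Z, rfl, h⟩⟩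
  exact ((Quotient.exact hZW : Z.toBR.Equiv W.toBR).ball r).trans hW

theorem PRGraph.ncard_bi_mem_TsetB_eq {Δ r s : ℕ} (α : BRGraph) {X Y : PRGraph Δ}
    (hrs : r < s) (h : (X.ball s).Equiv (Y.ball s)) :
    {p : X.G.neighborSet X.root | mkB (X.bi p.1 p.2) ∈ TsetB Δ r α}.ncard =
      {p : Y.G.neighborSet Y.root | mkB (Y.bi p.1 p.2) ∈ TsetB Δ r α}.ncard := by
  obtain ⟨φ, hφ⟩ := RGraph.Equiv.exists_neighborSet_equiv hrs h
  rw [← Nat.card_coe_set_eq, ← Nat.card_coe_set_eq]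
  refine Nat.card_congr (φ.subtypeEquiv fun x => ?_)
  simp only [Set.mem_ofPred_eq, mkB_mem_TsetB_iff]
  exact ⟨(hφ x).symm.trans, (hφ x).trans⟩

theorem fA_TsetB_mkG {Δ r : ℕ} (α : BRGraph) (X : PRGraph Δ) :
    fA (TsetB Δ r α) (mkG X) =
      {p : X.G.neighborSet X.root | mkB (X.bi p.1 p.2) ∈ TsetB Δ r α}.ncard :=
  PRGraph.ncard_bi_mem_TsetB_eq α r.lt_succ_self
    (RGraph.Equiv.ball (Quotient.mk_out (s := rsetoid Δ) X) _)

theorem fA_le {Δ : ℕ} (A : Set (BGr Δ)) (q : Gr Δ) : fA A q ≤ Δ := by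
  have hdeg := q.out.degbd q.out.root
  have := hdeg.1.to_subtype
  exact (Set.ncard_le_card _).trans ((Nat.card_coe_set_eq _).trans_le hdeg.2)

theorem Nat.sSup_mem_of_pos {S : Set ℕ} (h : 0 < sSup S) : sSup S ∈ S := by
  refine Nat.sSup_mem ?_ ?_
  · by_contra hS
    simp [Set.not_nonempty_iff_eq_empty.mp hS] at h
  · by_contra hS
    simp [Nat.sSup_of_not_bddAbove hS] at h

theorem two_zpow_neg_le_rdist_of_fA_ne {Δ r : ℕ} {α : BRGraph} {q₁ q₂ : Gr Δ}
    (h : fA (TsetB Δ r α) q₁ ≠ fA (TsetB Δ r α) q₂) : (2 : ℝ) ^ (-(r : ℤ)) ≤ rdist q₁ q₂ := by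
  have hne : q₁ ≠ q₂ := by rintro rfl; exact h rfl
  rw [rdist, if_neg hne]
  refine zpow_le_zpow_right₀ one_le_two (neg_le_neg (Nat.cast_le.mpr ?_))
  by_contra! hlt
  obtain ⟨X, Y, rfl, rfl, hXY⟩ := Nat.sSup_mem_of_pos (r.zero_le.trans_lt hlt)
  rw [fA_TsetB_mkG, fA_TsetB_mkG] at h
  exact h (PRGraph.ncard_bi_mem_TsetB_eq α hlt hXY)

theorem fA_lipschitz_general (Δ : ℕ) [MetricSpace (Gr Δ)]
    (hdist : ∀ a b : Gr Δ, dist a b = rdist a b)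
    (r : ℕ) (αb : BRGraph) :
    ∀ q₁ q₂ : Gr Δ,
      |(fA (TsetB Δ r αb) q₁ : ℝ) - (fA (TsetB Δ r αb) q₂ : ℝ)|
        ≤ (Δ : ℝ) * 2 ^ r * dist q₁ q₂ := by
  intro q₁ q₂
  by_cases heq : fA (TsetB Δ r αb) q₁ = fA (TsetB Δ r αb) q₂
  · rw [heq, sub_self, abs_zero]
    positivity
  calc |(fA (TsetB Δ r αb) q₁ : ℝ) - (fA (TsetB Δ r αb) q₂ : ℝ)|
      ≤ Δ := abs_sub_le_of_nonneg_of_le (Nat.cast_nonneg _) (mod_cast fA_le _ _)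
        (Nat.cast_nonneg _) (mod_cast fA_le _ _)
    _ = Δ * 2 ^ r * 2 ^ (-(r : ℤ)) := by
      rw [mul_assoc, ← zpow_natCast, ← zpow_add₀ two_ne_zero, add_neg_cancel, zpow_zero, mul_one]
    _ ≤ Δ * 2 ^ r * dist q₁ q₂ := by
      rw [hdist]
      gcongr
      exact two_zpow_neg_le_rdist_of_fA_ne heq

/-- For `A = T_r(Gr⃗, α⃗)`, the neighbour-counting function `f_A` is Lipschitz
with constant `Δ · 2^r` on `(Gr, ρ)`. -/
theorem fA_lipschitz (Δ : ℕ) [MetricSpace (Gr Δ)]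
    (hdist : ∀ a b : Gr Δ, dist a b = rdist a b)
    (r : ℕ) (αb : BRGraph) (hα : αb.IsBall r) :
    ∀ q₁ q₂ : Gr Δ,
      |(fA (TsetB Δ r αb) q₁ : ℝ) - (fA (TsetB Δ r αb) q₂ : ℝ)|
        ≤ (Δ : ℝ) * 2 ^ r * dist q₁ q₂ :=
  fA_lipschitz_general Δ hdist r αb
end

section
/- Let X be a standard Borel space with a Borel probability measure μ, E a countable Borel equivalence relation on X, and define measures M(A) = ∫ |{y : (x,y) ∈ A}| dμ(x) and M'(A) = ∫ |{y : (y,x) ∈ A}| dμ(x) on Borel subsets A ⊆ E. If M = M', then μ is E-invariant, i.e. for every Borel bijection f : A → B between Borel subsets of X with graph contained in E, μ(A) = μ(B). -/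
/-!
Apply the hypothesis `M = M'` to the graph of `f`. Every `x ∈ A` has exactly one point above it
in the graph and every `y ∈ B` exactly one point below it (as `f` is bijective), while all other
fibres are empty; so `M` of the graph is `μ A` and `M'` of the graph is `μ B`. The graph is Borel
by the Lusin–Souslin theorem, being the injective Borel image of the standard Borel space `A`.
-/

open MeasureTheory Set

section SubtypeGraph

variable {X Y : Type*} {A : Set X} {B : Set Y}

def subtypeGraph (f : A → B) : Set (X × Y) :=
  range fun a : A => ((a : X), (f a : Y))

lemma subtypeGraph_symm (e : A ≃ B) :
    subtypeGraph e.symm = Prod.swap ⁻¹' subtypeGraph e := by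
  ext ⟨y, x⟩
  constructor
  · rintro ⟨b, hb⟩
    exact ⟨e.symm b, by simpa [Prod.ext_iff, and_comm] using hb⟩
  · rintro ⟨a, ha⟩
    exact ⟨e a, by simpa [Prod.ext_iff, and_comm] using ha⟩

lemma encard_fiber_subtypeGraph (f : A → B) (x : X) :
    {y | (x, y) ∈ subtypeGraph f}.encard = A.indicator 1 x := by
  by_cases hx : x ∈ A
  · have hfiber : {y | (x, y) ∈ subtypeGraph f} = {(f ⟨x, hx⟩ : Y)} := by
      ext y
      simp only [subtypeGraph, mem_ofPred_eq, mem_range, Prod.ext_iff, mem_singleton_iff]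
      constructor
      · rintro ⟨a, rfl, rfl⟩
        rfl
      · rintro rfl
        exact ⟨⟨x, hx⟩, rfl, rfl⟩
    simp [hfiber, hx]
  · have hfiber : {y | (x, y) ∈ subtypeGraph f} = ∅ :=
      eq_empty_of_forall_notMem fun y ⟨a, ha⟩ => hx <| by
        simp only [Prod.ext_iff] at ha
        exact ha.1 ▸ a.2
    simp [hfiber, hx]

lemma lintegral_encard_fiber_subtypeGraph [MeasurableSpace X] (μ : Measure X)
    (hA : MeasurableSet A) (f : A → B) :
    ∫⁻ x, ({y | (x, y) ∈ subtypeGraph f}.encard : ENNReal) ∂μ = μ A := by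
  simp_rw [encard_fiber_subtypeGraph, ← lintegral_indicator_one hA]
  congr with x
  by_cases hx : x ∈ A <;> simp [hx]

lemma measurableSet_subtypeGraph [MeasurableSpace X] [StandardBorelSpace X]
    [MeasurableSpace Y] [StandardBorelSpace Y] (hA : MeasurableSet A) {f : A → B}
    (hf : Measurable f) : MeasurableSet (subtypeGraph f) := by
  have : StandardBorelSpace A := hA.standardBorel
  have hinj : Function.Injective fun a : A => ((a : X), (f a : Y)) :=
    fun a b hab => Subtype.ext (congrArg Prod.fst hab)
  exact (Measurable.measurableEmbedding (by fun_prop) hinj).measurableSet_range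

end SubtypeGraph

theorem measure_invariant_of_mass_transport_general
    {X : Type*} [MeasurableSpace X] [StandardBorelSpace X]
    (μ : Measure X)
    (E : Set (X × X))
    (hMM' : ∀ A : Set (X × X), A ⊆ E → MeasurableSet A →
      ∫⁻ x, (∑' _ : {y : X | (x, y) ∈ A}, (1 : ENNReal)) ∂μ
        = ∫⁻ x, (∑' _ : {y : X | (y, x) ∈ A}, (1 : ENNReal)) ∂μ) :
    ∀ (A B : Set X), MeasurableSet A → MeasurableSet B →
      ∀ f : A → B, Measurable f → Function.Bijective f →
        (∀ a : A, ((a : X), (f a : X)) ∈ E) → μ A = μ B := by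
  intro A B hA hB f hf hbij hgr
  set e := Equiv.ofBijective f hbij
  have hGE : subtypeGraph e ⊆ E := by
    rintro _ ⟨a, rfl⟩
    exact hgr a
  have htransport := hMM' _ hGE (measurableSet_subtypeGraph hA hf)
  have hswap (x : X) : {y | (y, x) ∈ subtypeGraph e} = {y | (x, y) ∈ subtypeGraph e.symm} := by
    rw [subtypeGraph_symm]
    rfl
  simp_rw [ENNReal.tsum_set_one, hswap, lintegral_encard_fiber_subtypeGraph μ hA,
    lintegral_encard_fiber_subtypeGraph μ hB] at htransport
  exact htransport

/-- Let `E` be a countable Borel equivalence relation on a standard Borel space `X`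
with probability measure `μ`, and let `M`, `M'` be the left and right counting
measures of `E` over `μ`.  If `M = M'` on Borel subsets of `E`, then `μ` is
`E`-invariant: every Borel bijection `f : A → B` with graph contained in `E`
satisfies `μ(A) = μ(B)`. -/
theorem measure_invariant_of_mass_transport
    {X : Type*} [MeasurableSpace X] [StandardBorelSpace X]
    (μ : Measure X) [IsProbabilityMeasure μ]
    (E : Set (X × X)) (hEmeas : MeasurableSet E)
    (hEeq : Equivalence (fun x y : X => (x, y) ∈ E))
    (hEcount : ∀ x : X, {y : X | (x, y) ∈ E}.Countable)
    (hMM' : ∀ A : Set (X × X), A ⊆ E → MeasurableSet A →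
      ∫⁻ x, (∑' _ : {y : X | (x, y) ∈ A}, (1 : ENNReal)) ∂μ
        = ∫⁻ x, (∑' _ : {y : X | (y, x) ∈ A}, (1 : ENNReal)) ∂μ) :
    ∀ (A B : Set X), MeasurableSet A → MeasurableSet B →
      ∀ f : A → B, Measurable f → Function.Bijective f →
        (∀ a : A, ((a : X), (f a : X)) ∈ E) → μ A = μ B :=
  measure_invariant_of_mass_transport_general μ E hMM'
end
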